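/- Let G be a finite abelian group of order q, Y a finite set, and W a channel (G, Y, W). Let d₁, d₂ ∈ G and ε > 0. If Z_{d₁}(W) > 1 − ε and Z_{d₂}(W) > 1 − ε, then for every d̃ ∈ ⟨d₁, d₂⟩ (the subgroup of G generated by d₁ and d₂), Z_{d̃}(W) ≥ 1 − 4q³ε. -/

import Mathlib

/-!
Embed the channel into `ℓ²(G × Y)` by `Ψ_d(x, y) = √W(y | x + d)`. Since all the shifts `Ψ_d`
are translates of one another, `N(d) = ‖Ψ₀ - Ψ_d‖` is a group seminorm on `G`, and expanding the
square gives `N(d)² = 2q(1 - Z_d(W))`. In a finite group every element of `⟨d₁, d₂⟩` is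
`a • d₁ + b • d₂` with `a, b < q`, so `N(d̃) ≤ q (N(d₁) + N(d₂))`; squaring turns this into
`1 - Z_{d̃}(W) ≤ 4q²ε`.
-/

open Finset

/-- Bhattacharyya distance between two input symbols:
`Z(W_{x,x̃}) = Σ_y √(W(y|x)·W(y|x̃))`. -/
noncomputable def Zpair {G Y : Type} [Fintype Y] (W : G → Y → ℝ) (x x' : G) : ℝ :=
  ∑ y : Y, Real.sqrt (W x y * W x' y)

/-- `Z_d(W) = (1/q)·Σ_{x∈G} Z(W_{x,x+d})`. -/
noncomputable def Zd {G Y : Type} [Fintype G] [Fintype Y] [Add G]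
    (W : G → Y → ℝ) (d : G) : ℝ :=
  (1 / (Fintype.card G : ℝ)) * ∑ x : G, Zpair W x (x + d)

lemma AddGroupSeminorm.apply_nsmul_le {G : Type*} [AddGroup G] (p : AddGroupSeminorm G)
    (n : ℕ) (a : G) : p (n • a) ≤ n * p a := by
  induction n with
  | zero => simp
  | succ n ih =>
    rw [succ_nsmul, Nat.cast_succ, add_one_mul]
    exact (map_add_le_add p _ _).trans (by gcongr)

lemma AddGroupSeminorm.le_card_mul_of_mem_closure_pair {G : Type*} [AddCommGroup G] [Fintype G]
    (p : AddGroupSeminorm G) {a b d : G} (hd : d ∈ AddSubgroup.closure {a, b}) :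
    p d ≤ Fintype.card G * (p a + p b) := by
  rw [← AddSubgroup.mem_toAddSubmonoid, AddSubgroup.closure_toAddSubmonoid_of_finite,
    AddSubmonoid.mem_closure_pair] at hd
  obtain ⟨m, n, rfl⟩ := hd
  have smul_le (k : ℕ) (c : G) : p (k • c) ≤ Fintype.card G * p c := by
    rw [← mod_addOrderOf_nsmul]
    refine (p.apply_nsmul_le _ c).trans (mul_le_mul_of_nonneg_right ?_ (apply_nonneg p c))
    exact_mod_cast ((Nat.mod_lt k (addOrderOf_pos c)).trans_le addOrderOf_le_card_univ).le
  rw [mul_add]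
  exact (map_add_le_add p _ _).trans (add_le_add (smul_le m a) (smul_le n b))

lemma sum_sq_sqrt_sub_sqrt {Y : Type*} [Fintype Y] {p r : Y → ℝ} (hp : ∀ y, 0 ≤ p y)
    (hr : ∀ y, 0 ≤ r y) (hp1 : ∑ y, p y = 1) (hr1 : ∑ y, r y = 1) :
    ∑ y, (√(p y) - √(r y)) ^ 2 = 2 - 2 * ∑ y, √(p y * r y) := by
  have h (y : Y) : (√(p y) - √(r y)) ^ 2 = p y + r y - 2 * √(p y * r y) := by
    rw [sub_sq, Real.sq_sqrt (hp y), Real.sq_sqrt (hr y), Real.sqrt_mul (hp y)]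
    ring
  simp only [h, sum_sub_distrib, sum_add_distrib, hp1, hr1, ← mul_sum]
  ring

section Hellinger

variable {G Y : Type} [Fintype G] [AddCommGroup G] [Fintype Y]

noncomputable def sqrtTranslate (W : G → Y → ℝ) (d : G) : EuclideanSpace ℝ (G × Y) :=
  WithLp.toLp 2 fun p => √(W (p.1 + d) p.2)

lemma dist_sqrtTranslate_add_left (W : G → Y → ℝ) (c d e : G) :
    dist (sqrtTranslate W (c + d)) (sqrtTranslate W (c + e)) =
      dist (sqrtTranslate W d) (sqrtTranslate W e) := by
  simp only [EuclideanSpace.dist_eq, sqrtTranslate]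
  congr 1
  exact Fintype.sum_equiv ((Equiv.addRight c).prodCongr (Equiv.refl Y)) _ _ fun p => by
    simp [add_assoc]

noncomputable def hellingerSeminorm (W : G → Y → ℝ) : AddGroupSeminorm G where
  toFun d := dist (sqrtTranslate W 0) (sqrtTranslate W d)
  map_zero' := dist_self _
  add_le' d e := by
    have := dist_sqrtTranslate_add_left W d 0 e
    rw [add_zero] at this
    exact (dist_triangle _ (sqrtTranslate W d) _).trans_eq (by rw [this])
  neg' d := by
    have := dist_sqrtTranslate_add_left W d 0 (-d)
    rw [add_zero, add_neg_cancel] at this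
    rw [← this, dist_comm]

lemma hellingerSeminorm_sq {W : G → Y → ℝ} (hW0 : ∀ x y, 0 ≤ W x y)
    (hW1 : ∀ x, ∑ y, W x y = 1) (d : G) :
    hellingerSeminorm W d ^ 2 = 2 * Fintype.card G * (1 - Zd W d) := by
  change dist (sqrtTranslate W 0) (sqrtTranslate W d) ^ 2 = _
  rw [EuclideanSpace.dist_eq, Real.sq_sqrt (by positivity), Fintype.sum_prod_type]
  simp only [sqrtTranslate, add_zero, Real.dist_eq, sq_abs]
  rw [sum_congr rfl fun x _ => sum_sq_sqrt_sub_sqrt (hW0 x) (hW0 (x + d)) (hW1 x) (hW1 _)]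
  simp only [Zd, Zpair, sum_sub_distrib, ← mul_sum, sum_const, card_univ]
  field_simp
  ring

end Hellinger

theorem Zd_high_on_generated_subgroup
    {G Y : Type} [Fintype G] [AddCommGroup G] [Fintype Y]
    (W : G → Y → ℝ) (hW0 : ∀ x y, 0 ≤ W x y) (hW1 : ∀ x, ∑ y, W x y = 1)
    (d₁ d₂ : G) (ε : ℝ) (hε : 0 < ε)
    (hZ1 : Zd W d₁ > 1 - ε) (hZ2 : Zd W d₂ > 1 - ε)
    (d' : G) (hd' : d' ∈ AddSubgroup.closure ({d₁, d₂} : Set G)) :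
    Zd W d' ≥ 1 - 4 * (Fintype.card G : ℝ) ^ 3 * ε := by
  have hN₁ := hellingerSeminorm_sq hW0 hW1 d₁
  have hN₂ := hellingerSeminorm_sq hW0 hW1 d₂
  have hN' := hellingerSeminorm_sq hW0 hW1 d'
  have hq : (1 : ℝ) ≤ Fintype.card G := Nat.one_le_cast.mpr Fintype.card_pos
  set q : ℝ := (Fintype.card G : ℝ)
  set N := hellingerSeminorm W
  have hN : 2 * q * (1 - Zd W d') ≤ 2 * q * (4 * q ^ 2 * ε) := by
    calc 2 * q * (1 - Zd W d') = N d' ^ 2 := hN'.symm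
      _ ≤ (q * (N d₁ + N d₂)) ^ 2 :=
          pow_le_pow_left₀ (apply_nonneg N d') (N.le_card_mul_of_mem_closure_pair hd') 2
      _ ≤ 2 * q ^ 2 * (N d₁ ^ 2 + N d₂ ^ 2) := by nlinarith [sq_nonneg (N d₁ - N d₂)]
      _ = 4 * q ^ 3 * ((1 - Zd W d₁) + (1 - Zd W d₂)) := by rw [hN₁, hN₂]; ring
      _ ≤ 4 * q ^ 3 * (2 * ε) := by gcongr; linarith
      _ = 2 * q * (4 * q ^ 2 * ε) := by ring
  have hZ := le_of_mul_le_mul_left hN (by positivity)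
  have hq23 : q ^ 2 ≤ q ^ 3 := pow_le_pow_right₀ hq (by norm_num)
  linarith [mul_le_mul_of_nonneg_right hq23 hε.le]
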